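/- arXiv:2502.13673 — 5 statements merged into one kernel-verified Lean document; each statement's English description precedes it below -/
import Mathlib

section
/- Let f be a pseudo-involutory formal power series with f'(0)=1, f ≠ -z. Then √(zf) composed with -f equals -√(zf); equivalently, f = ĥ∘h where h = √(zf(z)) is the formal power series square root of z·f(z) with positive leading coefficient and ĥ(z) = -h̄(-z). -/
open PowerSeries

/-- Composition `f ∘ g` of formal power series over `ℝ`, i.e. `f(g(z))`
(the usual composition when `g` has zero constant term). -/
noncomputable def pscomp (f g : PowerSeries ℝ) : PowerSeries ℝ :=
  PowerSeries.mk fun n => ∑ k ∈ Finset.range (n + 1), coeff k f * coeff n (g ^ k)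

lemma coeff_pscomp (a g : PowerSeries ℝ) (n : ℕ) :
    coeff n (pscomp a g) =
      ∑ k ∈ Finset.range (n + 1), coeff k a * coeff n (g ^ k) := by
  simp [pscomp]

lemma coeff_pow_eq_zero {g : PowerSeries ℝ} (hg : constantCoeff g = 0)
    {n k : ℕ} (h : n < k) : coeff n (g ^ k) = 0 := by
  have hdvd : (X : PowerSeries ℝ) ^ k ∣ g ^ k :=
    pow_dvd_pow_of_dvd (PowerSeries.X_dvd_iff.mpr hg) k
  exact PowerSeries.X_pow_dvd_iff.mp hdvd n h

lemma coeff_aeval {g : PowerSeries ℝ} (hg : constantCoeff g = 0)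
    (P : Polynomial ℝ) (n : ℕ) :
    coeff n (Polynomial.aeval g P) =
      ∑ k ∈ Finset.range (n + 1), P.coeff k * coeff n (g ^ k) := by
  have hN : P.natDegree < max (P.natDegree + 1) (n + 1) :=
    lt_of_lt_of_le (Nat.lt_succ_self _) (le_max_left _ _)
  rw [Polynomial.aeval_eq_sum_range' hN, map_sum]
  rw [← Finset.sum_subset (Finset.range_subset_range.mpr (le_max_right (P.natDegree + 1) (n + 1)))]
  · exact Finset.sum_congr rfl fun k _ => by rw [map_smul, smul_eq_mul]
  · intro k _ hk
    have : n < k := by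
      have := Finset.mem_range.not.mp hk
      omega
    rw [map_smul, smul_eq_mul, coeff_pow_eq_zero hg this, mul_zero]

lemma coeff_pscomp_trunc {g : PowerSeries ℝ} (hg : constantCoeff g = 0)
    (a : PowerSeries ℝ) {n m : ℕ} (hnm : n < m) :
    coeff n (pscomp a g) = coeff n (Polynomial.aeval g (trunc m a)) := by
  rw [coeff_aeval hg, coeff_pscomp]
  refine Finset.sum_congr rfl fun k hk => ?_
  rw [coeff_trunc, if_pos]
  exact lt_of_lt_of_le (Finset.mem_range.mp hk) hnm

lemma pscomp_add (a b g : PowerSeries ℝ) :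
    pscomp (a + b) g = pscomp a g + pscomp b g := by
  ext n
  simp [coeff_pscomp, add_mul, Finset.sum_add_distrib]

lemma pscomp_neg (a g : PowerSeries ℝ) : pscomp (-a) g = -pscomp a g := by
  ext n
  simp [coeff_pscomp, Finset.sum_neg_distrib]

lemma pscomp_C (r : ℝ) (g : PowerSeries ℝ) : pscomp (C r) g = C r := by
  ext n
  rw [coeff_pscomp]
  simp [coeff_C, ite_mul, coeff_one, Finset.sum_ite_eq]

lemma pscomp_one (g : PowerSeries ℝ) : pscomp 1 g = 1 := by
  simpa using pscomp_C 1 g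

lemma pscomp_mul {g : PowerSeries ℝ} (hg : constantCoeff g = 0)
    (a b : PowerSeries ℝ) : pscomp (a * b) g = pscomp a g * pscomp b g := by
  ext n
  rw [coeff_pscomp_trunc hg (a * b) (Nat.lt_succ_self n), PowerSeries.coeff_mul]
  have h1 : ∀ p ∈ Finset.HasAntidiagonal.antidiagonal n,
      coeff p.1 (pscomp a g) * coeff p.2 (pscomp b g) =
      coeff p.1 (Polynomial.aeval g (trunc (n + 1) a)) *
        coeff p.2 (Polynomial.aeval g (trunc (n + 1) b)) := by
    intro p hp
    rw [coeff_pscomp_trunc hg a (Nat.lt_succ_of_le (Finset.HasAntidiagonal.antidiagonal.fst_le hp)),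
      coeff_pscomp_trunc hg b (Nat.lt_succ_of_le (Finset.HasAntidiagonal.antidiagonal.snd_le hp))]
  rw [Finset.sum_congr rfl h1, ← PowerSeries.coeff_mul, ← map_mul, coeff_aeval hg,
    coeff_aeval hg]
  refine Finset.sum_congr rfl fun k hk => ?_
  have hkn : k < n + 1 := Finset.mem_range.mp hk
  congr 1
  rw [coeff_trunc, if_pos hkn, PowerSeries.coeff_mul, Polynomial.coeff_mul]
  refine Finset.sum_congr rfl fun p hp => ?_
  rw [coeff_trunc, coeff_trunc,
    if_pos (lt_of_le_of_lt (Finset.HasAntidiagonal.antidiagonal.fst_le hp) hkn),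
    if_pos (lt_of_le_of_lt (Finset.HasAntidiagonal.antidiagonal.snd_le hp) hkn)]

lemma pscomp_pow {g : PowerSeries ℝ} (hg : constantCoeff g = 0)
    (a : PowerSeries ℝ) (k : ℕ) : pscomp (a ^ k) g = (pscomp a g) ^ k := by
  induction k with
  | zero => simpa using pscomp_one g
  | succ k ih => rw [pow_succ, pow_succ, pscomp_mul hg, ih]

lemma pscomp_X {g : PowerSeries ℝ} (hg : constantCoeff g = 0) :
    pscomp X g = g := by
  ext n
  rw [coeff_pscomp]
  rcases n with _ | n
  · simpa [coeff_zero_eq_constantCoeff] using hg.symm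
  · simp [PowerSeries.coeff_X, ite_mul, Finset.sum_ite_eq, Nat.succ_lt_succ_iff]

lemma pscomp_aeval {c : PowerSeries ℝ} (hc : constantCoeff c = 0)
    (b : PowerSeries ℝ) (P : Polynomial ℝ) :
    pscomp (Polynomial.aeval b P) c = Polynomial.aeval (pscomp b c) P := by
  induction P using Polynomial.induction_on' with
  | add p q hp hq => rw [map_add, pscomp_add, hp, hq, map_add]
  | monomial k r =>
      rw [Polynomial.aeval_monomial, Polynomial.aeval_monomial, pscomp_mul hc,
        pscomp_pow hc]
      congr 1
      show pscomp (algebraMap ℝ (PowerSeries ℝ) r) c = _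
      rw [PowerSeries.algebraMap_apply, Algebra.algebraMap_self, RingHom.id_apply, pscomp_C]

lemma coeff_pscomp_congr {u v c : PowerSeries ℝ} {n : ℕ}
    (h : ∀ k ≤ n, coeff k u = coeff k v) :
    coeff n (pscomp u c) = coeff n (pscomp v c) := by
  rw [coeff_pscomp, coeff_pscomp]
  exact Finset.sum_congr rfl fun k hk => by
    rw [h k (Nat.lt_succ_iff.mp (Finset.mem_range.mp hk))]

lemma constantCoeff_pscomp {b : PowerSeries ℝ} (c : PowerSeries ℝ)
    (hb : constantCoeff b = 0) : constantCoeff (pscomp b c) = 0 := by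
  rw [← coeff_zero_eq_constantCoeff, coeff_pscomp]
  simp [coeff_zero_eq_constantCoeff, hb]

lemma pscomp_assoc {b c : PowerSeries ℝ} (a : PowerSeries ℝ)
    (hb : constantCoeff b = 0) (hc : constantCoeff c = 0) :
    pscomp (pscomp a b) c = pscomp a (pscomp b c) := by
  have hbc : constantCoeff (pscomp b c) = 0 := constantCoeff_pscomp c hb
  ext n
  calc coeff n (pscomp (pscomp a b) c)
      = coeff n (pscomp (Polynomial.aeval b (trunc (n + 1) a)) c) :=
        coeff_pscomp_congr fun k hk =>
          coeff_pscomp_trunc hb a (Nat.lt_succ_of_le hk)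
    _ = coeff n (Polynomial.aeval (pscomp b c) (trunc (n + 1) a)) := by
        rw [pscomp_aeval hc]
    _ = coeff n (pscomp a (pscomp b c)) :=
        (coeff_pscomp_trunc hbc a (Nat.lt_succ_self n)).symm

/-- For pseudo-involutory f ≠ -z with f'(0)=1 : √(zf)∘(-f) = -√(zf), and
f = ĥ∘h for h = √(zf). -/
theorem stmt_3 (f h : PowerSeries ℝ)
    (hf0 : constantCoeff f = 0) (hf1 : coeff 1 f = 1)
    (hpi : pscomp f (-f) = -X) (hne : f ≠ -X)
    -- h = √(zf): square root of z·f with positive leading coefficient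
    (hsq : h ^ 2 = X * f) (hh0 : constantCoeff h = 0) (hh1 : coeff 1 h = 1) :
    pscomp h (-f) = -h ∧
      ∀ hbar : PowerSeries ℝ, pscomp h hbar = X → pscomp hbar h = X →
        f = pscomp (-(pscomp hbar (-X))) h := by
  have hcf : constantCoeff (-f) = 0 := by simp [hf0]
  set g := pscomp h (-f) with hg
  have hg2 : g ^ 2 = h ^ 2 := by
    have : g ^ 2 = pscomp (h ^ 2) (-f) := by
      rw [pow_two, pow_two, pscomp_mul hcf]
    rw [this, hsq, pscomp_mul hcf, pscomp_X hcf, hpi]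
    ring
  have hcoeff1 : coeff 1 g = -1 := by
    rw [hg, coeff_pscomp]
    simp [Finset.sum_range_succ, hh0, hh1, hf1, coeff_zero_eq_constantCoeff]
  have hgh : g = -h := by
    have hfac : (g - h) * (g + h) = 0 := by
      have : g ^ 2 - h ^ 2 = 0 := by rw [hg2]; ring
      calc (g - h) * (g + h) = g ^ 2 - h ^ 2 := by ring
        _ = 0 := this
    rcases mul_eq_zero.mp hfac with h1 | h1
    · exfalso
      have : g = h := sub_eq_zero.mp h1
      rw [this, hh1] at hcoeff1
      norm_num at hcoeff1
    · exact eq_neg_of_add_eq_zero_left h1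
  refine ⟨hgh, fun hbar hb1 hb2 => ?_⟩
  have hbar0 : constantCoeff hbar = 0 := by
    have := congrArg (coeff 0) hb2
    rw [coeff_pscomp] at this
    simpa [coeff_zero_eq_constantCoeff] using this
  have hXn : constantCoeff (-X : PowerSeries ℝ) = 0 := by simp
  rw [pscomp_neg, pscomp_assoc hbar hXn hh0, pscomp_neg, pscomp_X hh0]
  rw [← hgh, hg, ← pscomp_assoc hbar hh0 hcf, hb2, pscomp_X hcf, neg_neg]
end

section
/- For invertible formal power series h₁, h₂ of order 1, h₁∘ĥ₁ = h₂∘ĥ₂ if and only if φ = h̄₁∘h₂ is an odd power series (φ(-z) = -φ(z)). -/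
open PowerSeries

/-!
Write `ν = -X`, so that `ĥ = ν ∘ h̄ ∘ ν`, and `φ = h̄₁ ∘ h₂`. Composing on the right with the
invertible series `ν ∘ h₂` (inverse `h̄₂ ∘ ν`) turns `h₁ ∘ ĥ₁` into `h₁ ∘ ν ∘ φ` and `h₂ ∘ ĥ₂`
into `h₂ ∘ ν`; composing on the left with `h̄₁` turns `h₁ ∘ ν ∘ φ = h₂ ∘ ν` into `ν ∘ φ = φ ∘ ν`.
-/

namespace PowerSeries

variable {R : Type*} [CommRing R]

theorem HasSubst.neg {a : R⟦X⟧} (ha : HasSubst a) : HasSubst (-a) := by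
  simpa [HasSubst] using IsNilpotent.neg ha

theorem HasSubst.subst {a b : R⟦X⟧} (ha : HasSubst a) (hb : HasSubst b) :
    HasSubst (subst b a) := by
  simpa [coe_substAlgHom] using HasSubst.comp ha hb

theorem subst_neg {a : R⟦X⟧} (ha : HasSubst a) (f : R⟦X⟧) :
    subst a (-f) = -subst a f := by
  rw [← coe_substAlgHom ha, map_neg]

theorem subst_neg_X {a : R⟦X⟧} (ha : HasSubst a) : subst a (-X : R⟦X⟧) = -a := by
  rw [subst_neg ha, subst_X ha]

theorem subst_left_inj_of_subst_eq_X {u v A B : R⟦X⟧} (hu : HasSubst u) (hv : HasSubst v)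
    (huv : subst v u = X) : subst u A = subst u B ↔ A = B := by
  refine ⟨fun h => ?_, fun h => h ▸ rfl⟩
  rw [← X_subst A, ← X_subst B, ← huv, ← subst_comp_subst_apply hu hv,
    ← subst_comp_subst_apply hu hv, h]

theorem subst_eq_iff_eq_subst {g h A B : R⟦X⟧} (hg : HasSubst g) (hh : HasSubst h)
    (hA : HasSubst A) (hB : HasSubst B) (hgh : subst h g = X) (hhg : subst g h = X) :
    subst A h = B ↔ A = subst B g := by
  constructor
  · rintro rfl
    rw [← subst_comp_subst_apply hh hA, hgh, subst_X hA]
  · rintro rfl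
    rw [← subst_comp_subst_apply hg hB, hhg, subst_X hB]

theorem subst_neg_neg_subst_neg_X {g f : R⟦X⟧} (hf : HasSubst f) :
    subst (-f) (-subst (-X : R⟦X⟧) g) = -subst f g := by
  rw [subst_neg hf.neg, subst_comp_subst_apply HasSubst.X'.neg hf.neg, subst_neg_X hf.neg,
    neg_neg]

/-- `-subst (-X) g` is `ĥ` when `g = h̄`. -/
theorem subst_hat_eq_subst_hat_iff {h₁ h₂ g₁ g₂ : R⟦X⟧} (hh₁ : HasSubst h₁)
    (hh₂ : HasSubst h₂) (hg₁ : HasSubst g₁) (hg₂ : HasSubst g₂)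
    (h₁g₁ : subst g₁ h₁ = X) (g₁h₁ : subst h₁ g₁ = X)
    (h₂g₂ : subst g₂ h₂ = X) (g₂h₂ : subst h₂ g₂ = X) :
    subst (-subst (-X : R⟦X⟧) g₁) h₁ = subst (-subst (-X : R⟦X⟧) g₂) h₂ ↔
      subst (-X : R⟦X⟧) (subst h₂ g₁) = -subst h₂ g₁ := by
  have hν : HasSubst (-X : R⟦X⟧) := HasSubst.X'.neg
  have hφ : HasSubst (subst h₂ g₁) := hg₁.subst hh₂
  have h₂_neg_inv : subst (subst (-X : R⟦X⟧) g₂) (-h₂) = X := by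
    rw [subst_neg (hg₂.subst hν), ← subst_comp_subst_apply hg₂ hν, h₂g₂, subst_X hν, neg_neg]
  rw [← subst_left_inj_of_subst_eq_X hh₂.neg (hg₂.subst hν) h₂_neg_inv,
    subst_comp_subst_apply (hg₁.subst hν).neg hh₂.neg,
    subst_comp_subst_apply (hg₂.subst hν).neg hh₂.neg,
    subst_neg_neg_subst_neg_X hh₂, subst_neg_neg_subst_neg_X hh₂, g₂h₂,
    subst_eq_iff_eq_subst hg₁ hh₁ hφ.neg (hh₂.subst hν) g₁h₁ h₁g₁,
    subst_comp_subst_apply hh₂ hν]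
  exact eq_comm

end PowerSeries

theorem constantCoeff_pscomp_s4 (f g : ℝ⟦X⟧) : constantCoeff (pscomp f g) = constantCoeff f := by
  rw [← coeff_zero_eq_constantCoeff_apply, ← coeff_zero_eq_constantCoeff_apply]
  simp [pscomp]

theorem pscomp_eq_subst (f : ℝ⟦X⟧) {g : ℝ⟦X⟧} (hg : constantCoeff g = 0) :
    pscomp f g = subst g f := by
  ext n
  have hsupp : (Function.support fun d => coeff d f • coeff n (g ^ d)) ⊆
      Finset.range (n + 1) := by
    intro d hd
    by_contra hdn
    have hlt : (n : ℕ∞) < (g ^ d).order :=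
      (Nat.cast_lt.2 (by simpa using hdn)).trans_le (le_order_pow_of_constantCoeff_eq_zero d hg)
    exact hd (by simp only [coeff_of_lt_order n hlt, smul_zero])
  rw [coeff_subst' (HasSubst.of_constantCoeff_zero' hg), finsum_eq_sum_of_support_subset _ hsupp]
  simp [pscomp]

theorem stmt_4_general (h1 h2 g1 g2 : PowerSeries ℝ)
    (h10 : constantCoeff h1 = 0)
    (h20 : constantCoeff h2 = 0)
    (hi1 : pscomp h1 g1 = X) (hi2 : pscomp g1 h1 = X)
    (hi3 : pscomp h2 g2 = X) (hi4 : pscomp g2 h2 = X) :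
    pscomp h1 (-(pscomp g1 (-X))) = pscomp h2 (-(pscomp g2 (-X))) ↔
      pscomp (pscomp g1 h2) (-X) = -(pscomp g1 h2) := by
  have g10 : constantCoeff g1 = 0 := by
    simpa [constantCoeff_pscomp_s4] using congrArg constantCoeff hi2
  have g20 : constantCoeff g2 = 0 := by
    simpa [constantCoeff_pscomp_s4] using congrArg constantCoeff hi4
  have hν : constantCoeff (-X : ℝ⟦X⟧) = 0 := by simp
  have hhat (g : ℝ⟦X⟧) (hg : constantCoeff g = 0) : constantCoeff (-pscomp g (-X)) = 0 := by
    rw [map_neg, constantCoeff_pscomp_s4, hg, neg_zero]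
  rw [pscomp_eq_subst _ g10] at hi1
  rw [pscomp_eq_subst _ h10] at hi2
  rw [pscomp_eq_subst _ g20] at hi3
  rw [pscomp_eq_subst _ h20] at hi4
  rw [pscomp_eq_subst h1 (hhat g1 g10), pscomp_eq_subst h2 (hhat g2 g20),
    pscomp_eq_subst (pscomp g1 h2) hν, pscomp_eq_subst g1 hν, pscomp_eq_subst g2 hν,
    pscomp_eq_subst g1 h20]
  exact subst_hat_eq_subst_hat_iff (.of_constantCoeff_zero' h10) (.of_constantCoeff_zero' h20)
    (.of_constantCoeff_zero' g10) (.of_constantCoeff_zero' g20) hi1 hi2 hi3 hi4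

/-- For invertible h₁, h₂ of order 1, h₁∘ĥ₁ = h₂∘ĥ₂ iff φ = h̄₁∘h₂ is odd. -/
theorem stmt_4 (h1 h2 g1 g2 : PowerSeries ℝ)
    (h10 : constantCoeff h1 = 0) (h11 : coeff 1 h1 ≠ 0)
    (h20 : constantCoeff h2 = 0) (h21 : coeff 1 h2 ≠ 0)
    (hi1 : pscomp h1 g1 = X) (hi2 : pscomp g1 h1 = X)
    (hi3 : pscomp h2 g2 = X) (hi4 : pscomp g2 h2 = X) :
    pscomp h1 (-(pscomp g1 (-X))) = pscomp h2 (-(pscomp g2 (-X))) ↔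
      pscomp (pscomp g1 h2) (-X) = -(pscomp g1 h2) :=
  stmt_4_general h1 h2 g1 g2 h10 h20 hi1 hi2 hi3 hi4
end

section
/- Define polynomials P_n(z) = U_n((z+2)/2) + U_{n-1}((z+2)/2) where U_n is the Chebyshev polynomial of the second kind. Then for formal variables u, v: (u-v)·(uv)^n·P_n((u-v)²/(uv)) = u^{2n+1} - v^{2n+1}, as an identity of polynomials in u,v after clearing denominators. -/
open Polynomial Polynomial.Chebyshev

/-- P_n(z) = U_n((z+2)/2) + U_{n-1}((z+2)/2), where `U` is the Chebyshev
polynomial of the second kind (with U_{-1} = 0). -/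
noncomputable def Pcheb (n : ℤ) : Polynomial ℝ :=
  (U ℝ n).comp (Polynomial.C (2⁻¹ : ℝ) * (Polynomial.X + 2)) +
    (U ℝ (n - 1)).comp (Polynomial.C (2⁻¹ : ℝ) * (Polynomial.X + 2))

/-- (u-v)·(uv)ⁿ·P_n((u-v)²/(uv)) = u^{2n+1} - v^{2n+1}, as an identity of
polynomials in u, v (stated for all real u, v with uv ≠ 0, which is
equivalent since ℝ is infinite). -/
theorem stmt_14 (n : ℕ) (u v : ℝ) (huv : u * v ≠ 0) :
    (u - v) * (u * v) ^ n * (Pcheb n).eval ((u - v) ^ 2 / (u * v)) =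
      u ^ (2 * n + 1) - v ^ (2 * n + 1) := by
  set x : ℝ := (2⁻¹ : ℝ) * ((u - v) ^ 2 / (u * v) + 2) with hxdef
  have hE : ∀ m : ℤ, (Pcheb m).eval ((u - v) ^ 2 / (u * v))
      = (U ℝ m).eval x + (U ℝ (m - 1)).eval x := by
    intro m
    simp [Pcheb, eval_comp, hxdef]
  have h2x : (u * v) * (2 * x) = u ^ 2 + v ^ 2 := by
    rw [hxdef]; field_simp [left_ne_zero_of_mul huv, right_ne_zero_of_mul huv]; ring
  induction n using Nat.twoStepInduction with
  | zero =>
      simp [hE, Polynomial.Chebyshev.U_zero, Polynomial.Chebyshev.U_neg_one]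
  | one =>
      have h := hE 1
      norm_num [Polynomial.Chebyshev.U_one, Polynomial.Chebyshev.U_zero] at h
      norm_num [h, hxdef]
      field_simp [left_ne_zero_of_mul huv, right_ne_zero_of_mul huv]
      ring
  | more n ih ih1 =>
      have hc : ((n + 2 : ℕ) : ℤ) = (n : ℤ) + 2 := by push_cast; ring
      have hc1 : ((n + 1 : ℕ) : ℤ) = (n : ℤ) + 1 := by push_cast; ring
      rw [hc, hE]
      rw [hc1, hE] at ih1
      rw [hE] at ih
      have r1 : (U ℝ ((n : ℤ) + 2)).eval x
          = 2 * x * (U ℝ ((n : ℤ) + 1)).eval x - (U ℝ (n : ℤ)).eval x := by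
        rw [Polynomial.Chebyshev.U_add_two]; simp
      have r2 : (U ℝ ((n : ℤ) + 2 - 1)).eval x
          = 2 * x * (U ℝ ((n : ℤ) + 1 - 1)).eval x - (U ℝ ((n : ℤ) - 1)).eval x := by
        have : (n : ℤ) + 2 - 1 = ((n : ℤ) - 1) + 2 := by ring
        rw [this, Polynomial.Chebyshev.U_add_two]
        have : (n : ℤ) - 1 + 1 = (n : ℤ) + 1 - 1 := by ring
        simp [this]
      rw [r1, r2]
      have key : (u - v) * (u * v) ^ (n + 2) *
          (2 * x * (U ℝ ((n : ℤ) + 1)).eval x - (U ℝ (n : ℤ)).eval x +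
            (2 * x * (U ℝ ((n : ℤ) + 1 - 1)).eval x - (U ℝ ((n : ℤ) - 1)).eval x))
          = (u * v) * (2 * x) * ((u - v) * (u * v) ^ (n + 1) *
              ((U ℝ ((n : ℤ) + 1)).eval x + (U ℝ ((n : ℤ) + 1 - 1)).eval x))
            - (u * v) ^ 2 * ((u - v) * (u * v) ^ n *
              ((U ℝ (n : ℤ)).eval x + (U ℝ ((n : ℤ) - 1)).eval x)) := by
        ring
      rw [key, ih, ih1, h2x]
      ring
end

section
/- Define p_{2l}(z) = (U_l((z+2)/2) + U_{l-1}((z+2)/2))² and p_{2l+1}(z) = (z+4)·U_l((z+2)/2)² for l ≥ 0. Then for formal variables u, v and all n ≥ 0, (uv)^{n+1}·[z·p_n(z)] evaluated at z=(u-v)²/(uv) equals (u^{n+1} - v^{n+1})². -/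
open Polynomial Polynomial.Chebyshev

lemma lemA (u v : ℝ) (h : u * v ≠ 0) : ∀ l : ℕ,
    (u ^ 2 - v ^ 2) * (u * v) ^ l * (U ℝ l).eval ((u ^ 2 + v ^ 2) / (2 * (u * v)))
      = u ^ (2 * l + 2) - v ^ (2 * l + 2) := by
  intro l
  induction l using Nat.twoStepInduction with
  | zero => simp [U_zero]
  | one =>
    simp only [Nat.cast_one, U_one, eval_mul, eval_ofNat, eval_X]
    field_simp [left_ne_zero_of_mul h, right_ne_zero_of_mul h]
    ring
  | more l ih1 ih2 =>
    have hrec := U_add_two ℝ l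
    have : ((l : ℤ) + 2) = ((l + 2 : ℕ) : ℤ) := by push_cast; ring
    rw [this] at hrec
    rw [hrec]
    simp only [eval_sub, eval_mul, eval_ofNat, eval_X]
    have h1 : ((l : ℤ) + 1) = ((l + 1 : ℕ) : ℤ) := by push_cast; ring
    rw [h1]
    linear_combination (norm := skip) (2*((u^2+v^2)/(2*(u*v)))*(u*v))*ih2 - (u*v)^2*ih1
    field_simp [left_ne_zero_of_mul h, right_ne_zero_of_mul h]
    ring

lemma lemB (u v : ℝ) (h : u * v ≠ 0) : ∀ l : ℕ,
    (u - v) * (u * v) ^ l *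
      ((U ℝ l).eval ((u ^ 2 + v ^ 2) / (2 * (u * v))) +
        (U ℝ ((l : ℤ) - 1)).eval ((u ^ 2 + v ^ 2) / (2 * (u * v))))
      = u ^ (2 * l + 1) - v ^ (2 * l + 1) := by
  intro l
  induction l using Nat.twoStepInduction with
  | zero => simp [U_zero, U_neg_one]
  | one =>
    simp only [Nat.cast_one, U_one, sub_self, U_zero, eval_mul, eval_ofNat, eval_X, eval_one]
    field_simp [left_ne_zero_of_mul h, right_ne_zero_of_mul h]
    ring
  | more l ih1 ih2 =>
    have hrec1 := U_add_two ℝ l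
    have hrec2 := U_add_two ℝ ((l : ℤ) - 1)
    have e1 : ((l : ℤ) + 2) = ((l + 2 : ℕ) : ℤ) := by push_cast; ring
    have e2 : ((l : ℤ) - 1 + 2) = ((l + 2 : ℕ) : ℤ) - 1 := by push_cast; ring
    have e3 : ((l : ℤ) - 1 + 1) = ((l + 1 : ℕ) : ℤ) - 1 := by push_cast; ring
    have e4 : ((l : ℤ) + 1) = ((l + 1 : ℕ) : ℤ) := by push_cast; ring
    rw [e1] at hrec1
    rw [e2, e3] at hrec2
    rw [hrec1, hrec2]
    simp only [eval_sub, eval_mul, eval_ofNat, eval_X]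
    rw [e4]
    linear_combination (norm := skip) (2*((u^2+v^2)/(2*(u*v)))*(u*v))*ih2 - (u*v)^2*ih1
    field_simp [left_ne_zero_of_mul h, right_ne_zero_of_mul h]
    ring

/-- For p_{2l}(z) = (U_l((z+2)/2) + U_{l-1}((z+2)/2))² and
p_{2l+1}(z) = (z+4)·U_l((z+2)/2)² :
(uv)^{n+1}·(z·p_n(z)) at z = (u-v)²/(uv) equals (u^{n+1} - v^{n+1})²,
as an identity of polynomials in u, v (stated for all real u, v with
uv ≠ 0, which is equivalent since ℝ is infinite). -/
theorem stmt_15 (p : ℕ → Polynomial ℝ)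
    (hpeven : ∀ l : ℕ, p (2 * l) =
      ((U ℝ l).comp (Polynomial.C (2⁻¹ : ℝ) * (Polynomial.X + 2)) +
        (U ℝ ((l : ℤ) - 1)).comp (Polynomial.C (2⁻¹ : ℝ) * (Polynomial.X + 2))) ^ 2)
    (hpodd : ∀ l : ℕ, p (2 * l + 1) =
      (Polynomial.X + 4) *
        ((U ℝ l).comp (Polynomial.C (2⁻¹ : ℝ) * (Polynomial.X + 2))) ^ 2) :
    ∀ (n : ℕ) (u v : ℝ), u * v ≠ 0 →
      (u * v) ^ (n + 1) *
          (((u - v) ^ 2 / (u * v)) * (p n).eval ((u - v) ^ 2 / (u * v))) =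
        (u ^ (n + 1) - v ^ (n + 1)) ^ 2 := by
  intro n u v h
  have hx : (2⁻¹ : ℝ) * ((u - v) ^ 2 / (u * v) + 2) = (u ^ 2 + v ^ 2) / (2 * (u * v)) := by
    field_simp [left_ne_zero_of_mul h, right_ne_zero_of_mul h]; ring
  rcases Nat.even_or_odd n with ⟨l, hl⟩ | ⟨l, hl⟩
  · subst hl
    rw [show l + l = 2 * l by ring, hpeven l]
    simp only [eval_pow, eval_add, eval_comp, eval_mul, eval_C, eval_X, eval_ofNat]
    rw [hx]
    have hB := lemB u v h l
    linear_combination (norm := skip) ((u - v) * (u * v) ^ l *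
      ((U ℝ l).eval ((u ^ 2 + v ^ 2) / (2 * (u * v))) +
        (U ℝ ((l : ℤ) - 1)).eval ((u ^ 2 + v ^ 2) / (2 * (u * v)))) +
      (u ^ (2 * l + 1) - v ^ (2 * l + 1))) * hB
    field_simp [left_ne_zero_of_mul h, right_ne_zero_of_mul h]
    ring
  · subst hl
    rw [hpodd l]
    simp only [eval_mul, eval_add, eval_pow, eval_comp, eval_C, eval_X, eval_ofNat]
    rw [hx]
    have hA := lemA u v h l
    linear_combination (norm := skip) ((u ^ 2 - v ^ 2) * (u * v) ^ l *
      (U ℝ l).eval ((u ^ 2 + v ^ 2) / (2 * (u * v))) +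
      (u ^ (2 * l + 2) - v ^ (2 * l + 2))) * hA
    field_simp [left_ne_zero_of_mul h, right_ne_zero_of_mul h]
    ring
end

section
/- With P_n(z) = U_n((z+2)/2) + U_{n-1}((z+2)/2) and p_n defined by p_{2l} = P_l², p_{2l+1}(z) = (z+4)·U_l((z+2)/2)², one has P_n(z) = p_n(z) - p_{n-1}(z) for all n ≥ 0, where p_{-1} = 0. -/
open Polynomial Polynomial.Chebyshev

lemma U_double_key : ∀ l : ℕ,
    U ℝ (2 * (l : ℤ)) = (U ℝ l) ^ 2 - (U ℝ ((l : ℤ) - 1)) ^ 2 ∧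
    U ℝ (2 * (l : ℤ) + 1) = U ℝ ((l : ℤ) + 1) * U ℝ l - U ℝ l * U ℝ ((l : ℤ) - 1) := by
  intro l
  induction l with
  | zero => norm_num [U_neg_one]
  | succ l ih =>
    obtain ⟨h1, h2⟩ := ih
    have ha := U_add_two ℝ (2 * (l : ℤ))
    have hc' := U_add_one ℝ (l : ℤ)
    have he : U ℝ (2 * (l : ℤ) + 2) = U ℝ ((l : ℤ) + 1) ^ 2 - U ℝ (l : ℤ) ^ 2 := by
      rw [ha, h2, h1, hc']; ring
    constructor
    · have goal1 : U ℝ (2 * ((l : ℤ) + 1)) = U ℝ ((l : ℤ) + 1) ^ 2 - U ℝ (l : ℤ) ^ 2 := by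
        rw [show 2 * ((l : ℤ) + 1) = 2 * (l : ℤ) + 2 by ring, he]
      convert goal1 using 3 <;> push_cast <;> ring
    · have hb' : U ℝ (2 * (l : ℤ) + 3) =
          2 * X * U ℝ (2 * (l : ℤ) + 2) - U ℝ (2 * (l : ℤ) + 1) := by
        have := U_add_two ℝ (2 * (l : ℤ) + 1)
        convert this using 2 <;> ring
      have goal2 : U ℝ (2 * ((l : ℤ) + 1) + 1) =
          U ℝ (((l : ℤ) + 1) + 1) * U ℝ ((l : ℤ) + 1) -
            U ℝ ((l : ℤ) + 1) * U ℝ (l : ℤ) := by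
        rw [show 2 * ((l : ℤ) + 1) + 1 = 2 * (l : ℤ) + 3 by ring, hb', he, h2,
          show ((l : ℤ) + 1) + 1 = (l : ℤ) + 2 by ring, U_add_two ℝ (l : ℤ), hc']
        ring
      convert goal2 using 3 <;> push_cast <;> ring

/-- With p_{2l} = P_l², p_{2l+1}(z) = (z+4)·U_l((z+2)/2)² and p_{-1} = 0,
one has P_n = p_n - p_{n-1} for all n ≥ 0. -/
theorem stmt_18 (p : ℤ → Polynomial ℝ)
    (hneg : p (-1) = 0)
    (hpeven : ∀ l : ℕ, p (2 * l) = (Pcheb l) ^ 2)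
    (hpodd : ∀ l : ℕ, p (2 * l + 1) =
      (Polynomial.X + 4) *
        ((U ℝ l).comp (Polynomial.C (2⁻¹ : ℝ) * (Polynomial.X + 2))) ^ 2) :
    ∀ n : ℕ, Pcheb n = p n - p ((n : ℤ) - 1) := by
  intro n
  set c : Polynomial ℝ := Polynomial.C (2⁻¹ : ℝ) * (Polynomial.X + 2) with hcdef
  have hX4 : (X : Polynomial ℝ) + 4 = 2 * c + 2 := by
    have h2 : (2 : Polynomial ℝ) * Polynomial.C (2⁻¹ : ℝ) = 1 := by
      have h : ((2 : ℕ) : Polynomial ℝ) = Polynomial.C ((2 : ℕ) : ℝ) :=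
        (Polynomial.C_eq_natCast 2).symm
      norm_num at h
      rw [h, ← Polynomial.C_mul]; norm_num
    rw [hcdef]
    linear_combination (-(X + 2) : Polynomial ℝ) * h2
  have hU1 : ∀ m : ℤ, U ℝ (m + 1) = 2 * X * U ℝ m - U ℝ (m - 1) := U_add_one ℝ
  rcases Nat.even_or_odd n with ⟨l, hl⟩ | ⟨l, hl⟩
  · -- even : n = l + l
    rcases Nat.eq_zero_or_pos l with rfl | hlpos
    · have hn0 : n = 0 := by omega
      subst hn0
      have h0 := hpeven 0
      have hP0 : Pcheb 0 = 1 := by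
        simp [Pcheb, U_neg_one, show (0 : ℤ) - 1 = -1 by ring]
      simp only [Nat.cast_zero, mul_zero, zero_sub, hneg, sub_zero] at h0 ⊢
      rw [h0, hP0]; norm_num
    · obtain ⟨m, rfl⟩ : ∃ m, l = m + 1 := ⟨l - 1, by omega⟩
      have e1 : (n : ℤ) = 2 * ((m + 1 : ℕ) : ℤ) := by push_cast; omega
      have e2 : (n : ℤ) - 1 = 2 * ((m : ℕ) : ℤ) + 1 := by push_cast; omega
      rw [e2, e1, hpeven (m + 1), hpodd m]
      have hpre : U ℝ (2 * (m : ℤ) + 2) + U ℝ (2 * (m : ℤ) + 1) =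
          (U ℝ ((m : ℤ) + 1) + U ℝ (m : ℤ)) ^ 2 - (2 * X + 2) * (U ℝ (m : ℤ)) ^ 2 := by
        obtain ⟨he, -⟩ := U_double_key (m + 1)
        obtain ⟨-, ho⟩ := U_double_key m
        push_cast at he
        have he' : U ℝ (2 * (m : ℤ) + 2) =
            U ℝ ((m : ℤ) + 1) ^ 2 - U ℝ (((m : ℤ) + 1) - 1) ^ 2 := by
          rw [show 2 * (m : ℤ) + 2 = 2 * ((m : ℤ) + 1) by ring]; exact he
        have hee : U ℝ (2 * (m : ℤ) + 2) = U ℝ ((m : ℤ) + 1) ^ 2 - U ℝ (m : ℤ) ^ 2 := by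
          rw [he']; ring_nf
        linear_combination hee + ho + (-(U ℝ (m : ℤ))) * hU1 (m : ℤ)
      have hcomp := congrArg (fun q => q.comp c) hpre
      simp only [add_comp, sub_comp, mul_comp, pow_comp, X_comp, ofNat_comp,
        Polynomial.eval₂_at_apply] at hcomp
      rw [Pcheb, Pcheb, hX4]
      rw [show 2 * ((m + 1 : ℕ) : ℤ) = 2 * (m : ℤ) + 2 by push_cast; ring,
        show 2 * (m : ℤ) + 2 - 1 = 2 * (m : ℤ) + 1 by ring,
        show ((m + 1 : ℕ) : ℤ) = (m : ℤ) + 1 by push_cast; ring,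
        show (m : ℤ) + 1 - 1 = (m : ℤ) by ring]
      linear_combination hcomp
  · -- odd : n = 2l + 1
    have e1 : (n : ℤ) = 2 * ((l : ℕ) : ℤ) + 1 := by push_cast; omega
    have e2 : (n : ℤ) - 1 = 2 * ((l : ℕ) : ℤ) := by push_cast; omega
    rw [e2, e1, hpodd l, hpeven l]
    have hpre : U ℝ (2 * (l : ℤ) + 1) + U ℝ (2 * (l : ℤ)) =
        (2 * X + 2) * (U ℝ (l : ℤ)) ^ 2 - (U ℝ (l : ℤ) + U ℝ ((l : ℤ) - 1)) ^ 2 := by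
      obtain ⟨he, ho⟩ := U_double_key l
      linear_combination ho + he + (U ℝ (l : ℤ)) * hU1 (l : ℤ)
    have hcomp := congrArg (fun q => q.comp c) hpre
    simp only [add_comp, sub_comp, mul_comp, pow_comp, X_comp, ofNat_comp] at hcomp
    rw [Pcheb, Pcheb, hX4]
    rw [show 2 * (l : ℤ) + 1 - 1 = 2 * (l : ℤ) by ring,
      show (l : ℤ) - 1 = (l : ℤ) - 1 by ring]
    linear_combination hcomp
end
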